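/- Every symmetric facet of the polytope P is the extension of a facet of the symmetrized polytope P_s: if (g, g_0) with g = g_s ⊕ 0 defines a facet of P (valid and saturated by d affinely independent points of P), then (g_s, g_0) is valid for P_s and is saturated by at least d_s affinely independent points of P_s, hence defines a facet of P_s. -/

import Mathlib

/-!
Since `g_s ∈ S`, the value `⟪g_s, p⟫` only depends on the projection `p_s`, so validity passes
from `P` to `P_s` and projections of saturating points still saturate. The `d` saturating points
span a hyperplane, of dimension `d - 1`, and the projection onto `S` lowers dimensions by at most
`dim T = d - d_s`; hence their projections span an affine subspace of dimension at least
`d_s - 1`, which contains `d_s` affinely independent points.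
-/

open Module

section LinearAlgebra

variable {K V V₂ : Type*} [DivisionRing K] [AddCommGroup V] [Module K V] [AddCommGroup V₂]
  [Module K V₂]

theorem Submodule.finrank_le_finrank_map_add_finrank_ker [FiniteDimensional K V]
    (f : V →ₗ[K] V₂) (L : Submodule K V) :
    finrank K L ≤ finrank K (L.map f) + finrank K (LinearMap.ker f) := by
  have hker : finrank K (LinearMap.ker (f.domRestrict L)) ≤ finrank K (LinearMap.ker f) := by
    rw [LinearMap.ker_domRestrict, ← Submodule.finrank_map_subtype_eq,
      Submodule.map_comap_subtype]
    exact Submodule.finrank_mono inf_le_right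
  have := LinearMap.finrank_range_add_finrank_ker (f.domRestrict L)
  rw [LinearMap.range_domRestrict] at this
  omega

theorem finrank_vectorSpan_le_finrank_vectorSpan_image_add_finrank_ker [FiniteDimensional K V]
    (f : V →ₗ[K] V₂) (s : Set V) :
    finrank K (vectorSpan K s) ≤
      finrank K (vectorSpan K (f '' s)) + finrank K (LinearMap.ker f) := by
  have := (vectorSpan K s).finrank_le_finrank_map_add_finrank_ker f
  rwa [← f.coe_toAffineMap, ← f.toAffineMap.map_vectorSpan]

theorem exists_affineIndependent_fin_of_le_finrank_vectorSpan {P : Type*} [AddTorsor V P]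
    [FiniteDimensional K V] {s : Set P} (hs : s.Nonempty) {m : ℕ}
    (hm : m ≤ finrank K (vectorSpan K s) + 1) :
    ∃ y : Fin m → P, (∀ i, y i ∈ s) ∧ AffineIndependent K y := by
  obtain ⟨t, hts, hspan, hti⟩ := exists_affineIndependent K V s
  have : Fintype t := (finite_set_of_fin_dim_affineIndependent K hti).fintype
  have : Nonempty t := by
    rw [Set.nonempty_coe_sort, ← affineSpan_nonempty K, hspan]
    exact hs.affineSpan K
  have hcard : Fintype.card (Fin m) ≤ Fintype.card t := by
    rwa [Fintype.card_fin, ← hti.finrank_vectorSpan_add_one, Subtype.range_coe,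
      ← direction_affineSpan, hspan, direction_affineSpan]
  obtain ⟨e⟩ := Function.Embedding.nonempty_of_card_le hcard
  exact ⟨fun i => e i, fun i => hts (e i).2, hti.comp_embedding e⟩

end LinearAlgebra

section OrthogonalProjection

variable {𝕜 E : Type*} [RCLike 𝕜] [NormedAddCommGroup E] [InnerProductSpace 𝕜 E]

theorem Submodule.inner_starProjection_right_of_mem {U : Submodule 𝕜 E}
    [U.HasOrthogonalProjection] {v : E} (hv : v ∈ U) (u : E) :
    inner 𝕜 v (U.starProjection u) = inner 𝕜 v u := by
  rw [← U.inner_starProjection_left_eq_right, U.starProjection_eq_self_iff.mpr hv]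

theorem exists_affineIndependent_starProjection_image [FiniteDimensional 𝕜 E]
    (U : Submodule 𝕜 E) {ι : Type*} [Fintype ι] {x : ι → E} (hx : AffineIndependent 𝕜 x)
    (hcard : Fintype.card ι = finrank 𝕜 E) :
    ∃ y : Fin (finrank 𝕜 U) → E,
      (∀ i, y i ∈ U.starProjection '' Set.range x) ∧ AffineIndependent 𝕜 y := by
  rcases isEmpty_or_nonempty ι with hι | hι
  · have hU : finrank 𝕜 U = 0 := by
      have := U.finrank_le
      rw [← hcard, Fintype.card_eq_zero] at this
      omega
    rw [hU]
    exact ⟨Fin.elim0, fun i => i.elim0, affineIndependent_of_subsingleton 𝕜 _⟩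
  · refine exists_affineIndependent_fin_of_le_finrank_vectorSpan
      ((Set.range_nonempty x).image _) ?_
    have hι_pos := Fintype.card_pos (α := ι)
    have hspan := hx.finrank_vectorSpan (n := finrank 𝕜 E - 1) (by omega)
    have hproj := finrank_vectorSpan_le_finrank_vectorSpan_image_add_finrank_ker
      (U.starProjection : E →ₗ[𝕜] E) (Set.range x)
    rw [show LinearMap.ker (U.starProjection : E →ₗ[𝕜] E) = Uᗮ from U.ker_starProjection,
      ContinuousLinearMap.coe_coe] at hproj
    have := U.finrank_add_finrank_orthogonal
    omega

end OrthogonalProjection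

open RealInnerProductSpace

theorem stmt19_general (d : ℕ)
    (S : Submodule ℝ (EuclideanSpace ℝ (Fin d)))
    (P : Set (EuclideanSpace ℝ (Fin d)))
    (Ps : Set (EuclideanSpace ℝ (Fin d)))
    (hPs : Ps = (fun p => (S.orthogonalProjectionOnto p : EuclideanSpace ℝ (Fin d))) '' P)
    (gs : EuclideanSpace ℝ (Fin d)) (hgs : gs ∈ S) (g0 : ℝ)
    (hvalid : ∀ p ∈ P, ⟪gs, p⟫ ≤ g0)
    (x : Fin d → EuclideanSpace ℝ (Fin d))
    (hx : ∀ i, x i ∈ P ∧ ⟪gs, x i⟫ = g0) (hxi : AffineIndependent ℝ x) :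
    (∀ q ∈ Ps, ⟪gs, q⟫ ≤ g0) ∧
      ∃ y : Fin (Module.finrank ℝ S) → EuclideanSpace ℝ (Fin d),
        (∀ i, y i ∈ Ps ∧ ⟪gs, y i⟫ = g0) ∧ AffineIndependent ℝ y := by
  have hPs' : Ps = S.starProjection '' P := hPs
  subst hPs'
  refine ⟨?_, ?_⟩
  · rintro _ ⟨p, hp, rfl⟩
    rw [S.inner_starProjection_right_of_mem hgs]
    exact hvalid p hp
  · obtain ⟨y, hyx, hy⟩ :=
      exists_affineIndependent_starProjection_image S hxi (by simp)
    refine ⟨y, fun i => ?_, hy⟩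
    obtain ⟨_, ⟨j, rfl⟩, hyj⟩ := hyx i
    rw [← hyj, S.inner_starProjection_right_of_mem hgs]
    exact ⟨⟨x j, (hx j).1, rfl⟩, (hx j).2⟩

/-- Every symmetric facet of `P` is the extension of a facet of the
symmetrized polytope `P_s`: if `(g_s ⊕ 0, g_0)` (i.e. `g_s ∈ S`, the fixed subspace of
the party-permutation group `G`) is valid for the `G`-invariant full-dimensional
polytope `P ⊆ ℝ^d` and saturated by `d` affinely independent points of `P`, then
`(g_s, g_0)` is valid for `P_s` and saturated by `d_s = dim S` affinely independent
points of `P_s`, hence defines a facet of `P_s`. -/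
theorem stmt19 (d : ℕ) (G : Type*) [Group G] [Fintype G]
    (ρ : G →* (EuclideanSpace ℝ (Fin d) ≃ₗᵢ[ℝ] EuclideanSpace ℝ (Fin d)))
    (S : Submodule ℝ (EuclideanSpace ℝ (Fin d)))
    (hS : ∀ v, v ∈ S ↔ ∀ g : G, ρ g v = v)
    (V P : Set (EuclideanSpace ℝ (Fin d))) (hV : V.Finite) (hP : P = convexHull ℝ V)
    (hfull : affineSpan ℝ P = ⊤)
    (hinv : ∀ g : G, ρ g '' P = P)
    (Ps : Set (EuclideanSpace ℝ (Fin d)))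
    (hPs : Ps = (fun p => (S.orthogonalProjectionOnto p : EuclideanSpace ℝ (Fin d))) '' P)
    (gs : EuclideanSpace ℝ (Fin d)) (hgs : gs ∈ S) (g0 : ℝ)
    (hvalid : ∀ p ∈ P, ⟪gs, p⟫ ≤ g0)
    (x : Fin d → EuclideanSpace ℝ (Fin d))
    (hx : ∀ i, x i ∈ P ∧ ⟪gs, x i⟫ = g0) (hxi : AffineIndependent ℝ x) :
    (∀ q ∈ Ps, ⟪gs, q⟫ ≤ g0) ∧
      ∃ y : Fin (Module.finrank ℝ S) → EuclideanSpace ℝ (Fin d),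
        (∀ i, y i ∈ Ps ∧ ⟪gs, y i⟫ = g0) ∧ AffineIndependent ℝ y :=
  stmt19_general d S P Ps hPs gs hgs g0 hvalid x hx hxi
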